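/- One-dimensional Hawking-type bound: let K ∈ ℝ, N > 1, H₀ ∈ ℝ, and assume either (K = 0 and H₀ < 0) or (K < 0 and H₀ < −√(−K(N−1))). Let T > 0 and let h : [0,T) → ℝ be positive, satisfy the (K,N)-convexity inequality on [0,T), and possess a right derivative h'₊(0) at 0 with h'₊(0) ≤ H₀ · h(0). Then T ≤ D_{K,N,H₀}. -/

import Mathlib

noncomputable section

/-- The distortion coefficient `σ_κ^{(s)}(θ)`. -/
def sigmaCoeff (κ s θ : ℝ) : ℝ :=
  if 0 < κ then Real.sin (s * θ * Real.sqrt κ) / Real.sin (θ * Real.sqrt κ)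
  else if κ = 0 then s
  else Real.sinh (s * θ * Real.sqrt (-κ)) / Real.sinh (θ * Real.sqrt (-κ))

/-- A positive function `h` on a real interval `I` satisfies the `(K,N)`-convexity
inequality. -/
def KNConvexOn (K N : ℝ) (I : Set ℝ) (h : ℝ → ℝ) : Prop :=
  ∀ t₀ ∈ I, ∀ t₁ ∈ I, t₀ < t₁ → ∀ l ∈ Set.Icc (0 : ℝ) 1,
    sigmaCoeff (K / (N - 1)) (1 - l) (t₁ - t₀) * h t₀ ^ (1 / (N - 1)) +
        sigmaCoeff (K / (N - 1)) l (t₁ - t₀) * h t₁ ^ (1 / (N - 1)) ≤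
      h ((1 - l) * t₀ + l * t₁) ^ (1 / (N - 1))

/-- The inverse of `coth` on `(1,∞)`: `arcoth(x) = (1/2)·log((x+1)/(x−1))`. -/
def arcoth (x : ℝ) : ℝ := 1 / 2 * Real.log ((x + 1) / (x - 1))

/-- The model diameter bound `D_{K,N,H₀}` (for `K = 0, H₀ < 0` and
`K < 0, H₀ < −√(−K(N−1))`). -/
def modelDiameter (K N H₀ : ℝ) : ℝ :=
  if K = 0 then (N - 1) / (-H₀)
  else Real.sqrt ((N - 1) / (-K)) * arcoth (-H₀ / Real.sqrt (-K * (N - 1)))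

/-! Write `g = h ^ (1 / (N - 1))` and `κ = K / (N - 1)`. For `0 < t < T`, the convexity inequality
between `0` and `t`, with its (nonnegative) term in `g t` dropped, gives
`σ_κ^{(1-l)}(t) · g 0 ≤ g (l t)` for `l ∈ [0, 1]`, with equality at `l = 0`. Comparing right
derivatives at `l = 0` gives `σ' · g 0 ≤ g'(0) · t ≤ H₀ t / (N - 1) · g 0`, where `σ'` is the
`l`-derivative of the left-hand coefficient. For `K = 0`, `σ' = -1` and `t ≤ (N - 1) / (-H₀)`;
for `K < 0`, `σ' = -x coth x` with `x = t √(-κ)`, so `coth x ≥ -H₀ / √(-K (N - 1)) > 1`, i.e.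
`x ≤ arcoth (-H₀ / √(-K (N - 1)))`. Letting `t ↑ T` gives the bound. -/

open Set Filter Topology Real

theorem HasDerivWithinAt.le_of_eventually_le {f g : ℝ → ℝ} {f' g' a : ℝ}
    (hf : HasDerivWithinAt f f' (Ici a) a) (hg : HasDerivWithinAt g g' (Ici a) a)
    (heq : f a = g a) (hle : ∀ᶠ x in 𝓝[>] a, f x ≤ g x) : f' ≤ g' := by
  have hslope := hasDerivWithinAt_iff_tendsto_slope.1 (hg.sub hf)
  rw [Ici_sdiff_left] at hslope
  refine sub_nonneg.1 (ge_of_tendsto hslope ?_)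
  filter_upwards [hle, self_mem_nhdsWithin] with x hx hax
  rw [slope_def_field, Pi.sub_apply, Pi.sub_apply, heq, sub_self, sub_zero]
  exact div_nonneg (sub_nonneg.2 hx) (sub_nonneg.2 (le_of_lt hax))

theorem sigmaCoeff_zero (s θ : ℝ) : sigmaCoeff 0 s θ = s := by
  simp [sigmaCoeff]

theorem sigmaCoeff_of_neg {κ : ℝ} (hκ : κ < 0) (s θ : ℝ) :
    sigmaCoeff κ s θ = sinh (s * θ * √(-κ)) / sinh (θ * √(-κ)) := by
  simp [sigmaCoeff, hκ.not_gt, hκ.ne]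

theorem sigmaCoeff_nonneg {κ s θ : ℝ} (hκ : κ ≤ 0) (hs : 0 ≤ s) (hθ : 0 ≤ θ) :
    0 ≤ sigmaCoeff κ s θ := by
  rcases hκ.lt_or_eq with hκ | rfl
  · rw [sigmaCoeff_of_neg hκ]
    exact div_nonneg (sinh_nonneg_iff.2 (by positivity)) (sinh_nonneg_iff.2 (by positivity))
  · rwa [sigmaCoeff_zero]

theorem sigmaCoeff_one {κ θ : ℝ} (hκ : κ ≤ 0) (hθ : θ ≠ 0) : sigmaCoeff κ 1 θ = 1 := by
  rcases hκ.lt_or_eq with hκ | rfl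
  · rw [sigmaCoeff_of_neg hκ, one_mul]
    exact div_self (sinh_ne_zero.2 (mul_ne_zero hθ (sqrt_pos.2 (neg_pos.2 hκ)).ne'))
  · exact sigmaCoeff_zero 1 θ

theorem hasDerivAt_sigmaCoeff_one_sub_of_neg {κ : ℝ} (hκ : κ < 0) (θ : ℝ) :
    HasDerivAt (fun l => sigmaCoeff κ (1 - l) θ)
      (-(θ * √(-κ) * cosh (θ * √(-κ)) / sinh (θ * √(-κ)))) 0 := by
  simp_rw [sigmaCoeff_of_neg hκ]
  refine (((((hasDerivAt_id' (0 : ℝ)).const_sub 1).mul_const θ).mul_const √(-κ)).sinh.div_const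
    (sinh (θ * √(-κ)))).congr_deriv ?_
  ring_nf

section KNConvexOn

variable {K N : ℝ} {I : Set ℝ} {h : ℝ → ℝ} {t₀ t₁ : ℝ}

theorem KNConvexOn.sigmaCoeff_mul_rpow_le (hconv : KNConvexOn K N I h) (hK : K ≤ 0)
    (hN : 1 < N) (ht₀ : t₀ ∈ I) (ht₁ : t₁ ∈ I) (ht : t₀ < t₁) (hh : 0 ≤ h t₁) {l : ℝ}
    (hl : l ∈ Icc 0 1) :
    sigmaCoeff (K / (N - 1)) (1 - l) (t₁ - t₀) * h t₀ ^ (1 / (N - 1)) ≤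
      h ((1 - l) * t₀ + l * t₁) ^ (1 / (N - 1)) := by
  have hκ : K / (N - 1) ≤ 0 := div_nonpos_of_nonpos_of_nonneg hK (by linarith)
  have hσ := sigmaCoeff_nonneg hκ hl.1 (sub_nonneg.2 ht.le)
  exact (le_add_of_nonneg_right (mul_nonneg hσ (rpow_nonneg hh _))).trans
    (hconv t₀ ht₀ t₁ ht₁ ht l hl)

theorem KNConvexOn.deriv_sigmaCoeff_mul_le (hconv : KNConvexOn K N I h) (hK : K ≤ 0)
    (hN : 1 < N) (ht₀ : t₀ ∈ I) (ht₁ : t₁ ∈ I) (ht : t₀ < t₁) (hh : 0 ≤ h t₁) {g' σ' : ℝ}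
    (hg : HasDerivWithinAt (fun t => h t ^ (1 / (N - 1))) g' (Ici t₀) t₀)
    (hσ : HasDerivWithinAt (fun l => sigmaCoeff (K / (N - 1)) (1 - l) (t₁ - t₀)) σ' (Ici 0) 0) :
    σ' * h t₀ ^ (1 / (N - 1)) ≤ g' * (t₁ - t₀) := by
  have hκ : K / (N - 1) ≤ 0 := div_nonpos_of_nonpos_of_nonneg hK (by linarith)
  have hsegment : HasDerivWithinAt (fun l : ℝ => (1 - l) * t₀ + l * t₁) (t₁ - t₀) (Ici 0) 0 := by
    refine ((((hasDerivAt_id' (0 : ℝ)).const_sub 1).mul_const t₀).add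
      ((hasDerivAt_id' (0 : ℝ)).mul_const t₁)).hasDerivWithinAt.congr_deriv ?_
    ring
  have hmaps : MapsTo (fun l : ℝ => (1 - l) * t₀ + l * t₁) (Ici 0) (Ici t₀) := fun l hl => by
    simp only [mem_Ici] at hl ⊢; nlinarith
  refine (hσ.mul_const _).le_of_eventually_le (hg.comp_of_eq 0 hsegment hmaps (by ring)) ?_ ?_
  · simp [sigmaCoeff_one hκ (sub_pos.2 ht).ne']
  · filter_upwards [Ioo_mem_nhdsGT one_pos] with l hl
    exact hconv.sigmaCoeff_mul_rpow_le hK hN ht₀ ht₁ ht hh (Ioo_subset_Icc_self hl)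

theorem KNConvexOn.deriv_sigmaCoeff_le (hconv : KNConvexOn K N I h) (hK : K ≤ 0)
    (hN : 1 < N) (ht₀ : t₀ ∈ I) (ht₁ : t₁ ∈ I) (ht : t₀ < t₁) (hh₀ : 0 < h t₀)
    (hh₁ : 0 ≤ h t₁) {d H₀ σ' : ℝ} (hder : HasDerivWithinAt h d (Ici t₀) t₀)
    (hdH : d ≤ H₀ * h t₀)
    (hσ : HasDerivWithinAt (fun l => sigmaCoeff (K / (N - 1)) (1 - l) (t₁ - t₀)) σ' (Ici 0) 0) :
    σ' ≤ H₀ * (t₁ - t₀) / (N - 1) := by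
  set p := 1 / (N - 1) with hp
  have hmul := hconv.deriv_sigmaCoeff_mul_le hK hN ht₀ ht₁ ht hh₁
    (hder.rpow_const (Or.inl hh₀.ne')) hσ
  have hg' : d * p * h t₀ ^ (p - 1) ≤ H₀ * p * h t₀ ^ p :=
    calc d * p * h t₀ ^ (p - 1) ≤ H₀ * h t₀ * p * h t₀ ^ (p - 1) := by gcongr
      _ = H₀ * p * h t₀ ^ p := by rw [rpow_sub_one hh₀.ne']; field_simp
  have : σ' * h t₀ ^ p ≤ H₀ * (t₁ - t₀) / (N - 1) * h t₀ ^ p := by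
    calc σ' * h t₀ ^ p ≤ d * p * h t₀ ^ (p - 1) * (t₁ - t₀) := hmul
      _ ≤ H₀ * p * h t₀ ^ p * (t₁ - t₀) := by gcongr
      _ = H₀ * (t₁ - t₀) / (N - 1) * h t₀ ^ p := by rw [hp]; ring
  exact le_of_mul_le_mul_right this (rpow_pos_of_pos hh₀ p)

end KNConvexOn

theorem le_arcoth_of_mul_sinh_le_cosh {c x : ℝ} (hc : 1 < c) (h : c * sinh x ≤ cosh x) :
    x ≤ arcoth c := by
  have hexp : exp x * exp x ≤ (c + 1) / (c - 1) := by
    rw [cosh_eq, sinh_eq, exp_neg] at h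
    have hx := exp_pos x
    rw [le_div_iff₀ (by linarith)]
    field_simp at h
    nlinarith
  have h2x : 2 * x ≤ log ((c + 1) / (c - 1)) := by
    rw [le_log_iff_exp_le (div_pos (by linarith) (by linarith)), two_mul, exp_add]
    exact hexp
  rw [arcoth]
  linarith

theorem le_modelDiameter_zero {N H₀ t : ℝ} (hN : 1 < N) (hH₀ : H₀ < 0)
    (h : -1 ≤ H₀ * t / (N - 1)) : t ≤ modelDiameter 0 N H₀ := by
  rw [le_div_iff₀ (by linarith)] at h
  rw [modelDiameter, if_pos rfl, le_div_iff₀ (neg_pos.2 hH₀)]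
  linarith

theorem le_modelDiameter_of_neg {K N H₀ t : ℝ} (hK : K < 0) (hN : 1 < N)
    (hH₀ : H₀ < -√(-K * (N - 1))) (ht : 0 < t)
    (h : -(t * √(-(K / (N - 1))) * cosh (t * √(-(K / (N - 1)))) / sinh (t * √(-(K / (N - 1)))))
      ≤ H₀ * t / (N - 1)) :
    t ≤ modelDiameter K N H₀ := by
  set a := √(-(K / (N - 1))) with ha
  have hN₁ : 0 < N - 1 := sub_pos.2 hN
  have ha₀ : 0 < a := sqrt_pos.2 (neg_pos.2 (div_neg_of_neg_of_pos hK hN₁))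
  have hsqrt : √(-K * (N - 1)) = (N - 1) * a := by
    have hsq : -K * (N - 1) = (N - 1) ^ 2 * -(K / (N - 1)) := by field_simp
    rw [hsq, sqrt_mul (sq_nonneg _), sqrt_sq hN₁.le]
  have hinv : √((N - 1) / (-K)) = a⁻¹ := by
    rw [ha, ← sqrt_inv, neg_div', inv_div]
  have hsinh : 0 < sinh (t * a) := sinh_pos_iff.2 (mul_pos ht ha₀)
  rw [neg_le, ← neg_div, div_le_div_iff₀ hN₁ hsinh] at h
  have hcoth : -H₀ / ((N - 1) * a) * sinh (t * a) ≤ cosh (t * a) := by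
    rw [div_mul_eq_mul_div, div_le_iff₀ (mul_pos hN₁ ha₀)]
    exact le_of_mul_le_mul_left (by linarith) ht
  have hc : 1 < -H₀ / ((N - 1) * a) := by
    rw [lt_div_iff₀ (mul_pos hN₁ ha₀), one_mul, ← hsqrt]
    linarith
  rw [modelDiameter, if_neg hK.ne, hinv, hsqrt, le_inv_mul_iff₀ ha₀, mul_comm]
  exact le_arcoth_of_mul_sinh_le_cosh hc hcoth

/-- One-dimensional Hawking-type bound: under `(K = 0, H₀ < 0)` or
`(K < 0, H₀ < −√(−K(N−1)))`, a positive `(K,N)`-convex density on `[0,T)` with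
right derivative at `0` at most `H₀·h(0)` forces `T ≤ D_{K,N,H₀}`. -/
theorem hawking_type_bound (K N H₀ : ℝ) (hN : 1 < N)
    (hcase : (K = 0 ∧ H₀ < 0) ∨ (K < 0 ∧ H₀ < -Real.sqrt (-K * (N - 1))))
    (T : ℝ) (hT : 0 < T)
    (h : ℝ → ℝ) (hpos : ∀ t ∈ Set.Ico (0 : ℝ) T, 0 < h t)
    (hconv : KNConvexOn K N (Set.Ico 0 T) h)
    (d : ℝ) (hder : HasDerivWithinAt h d (Set.Ici (0 : ℝ)) 0) (hdH : d ≤ H₀ * h 0) :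
    T ≤ modelDiameter K N H₀ := by
  have hK : K ≤ 0 := by rcases hcase with ⟨rfl, -⟩ | ⟨hK, -⟩ <;> linarith
  have hbound : ∀ t ∈ Ioo 0 T, ∀ σ',
      HasDerivWithinAt (fun l => sigmaCoeff (K / (N - 1)) (1 - l) t) σ' (Ici 0) 0 →
        σ' ≤ H₀ * t / (N - 1) := fun t ht σ' hσ => by
    have ht' : t ∈ Ico 0 T := Ioo_subset_Ico_self ht
    simpa only [sub_zero] using hconv.deriv_sigmaCoeff_le hK hN ⟨le_rfl, hT⟩ ht' ht.1
      (hpos 0 ⟨le_rfl, hT⟩) (hpos t ht').le hder hdH (by simpa only [sub_zero] using hσ)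
  refine le_of_forall_lt_imp_le_of_dense fun t htT => (le_max_left t (T / 2)).trans ?_
  have ht : max t (T / 2) ∈ Ioo 0 T :=
    ⟨(half_pos hT).trans_le (le_max_right _ _), max_lt htT (half_lt_self hT)⟩
  rcases hcase with ⟨rfl, hH₀⟩ | ⟨hK, hH₀⟩
  · refine le_modelDiameter_zero hN hH₀ (hbound _ ht (-1) ?_)
    simpa only [zero_div, sigmaCoeff_zero] using ((hasDerivAt_id' 0).const_sub 1).hasDerivWithinAt
  · have hκ : K / (N - 1) < 0 := div_neg_of_neg_of_pos hK (sub_pos.2 hN)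
    exact le_modelDiameter_of_neg hK hN hH₀ ht.1
      (hbound _ ht _ (hasDerivAt_sigmaCoeff_one_sub_of_neg hκ _).hasDerivWithinAt)
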